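/- Let G be a finite group and {A_i} an inverse system of G-modules indexed by ℕ such that all transition maps A_j → A_i are surjective and all induced maps on invariants A_j^G → A_i^G are surjective. Then the natural map H^1(G, lim A_i) → lim H^1(G, A_i) is an isomorphism. -/

import Mathlib

section H1
variable (G : Type) [Group G]

/-- 1-cocycles of `G` with values in `M`. -/
def zc (M : Type) [AddCommGroup M] [DistribMulAction G M] : AddSubgroup (G → M) where
  carrier := {f | ∀ g h : G, f (g * h) = f g + g • f h}
  zero_mem' := by intro g h; simp
  add_mem' := by
    intro a b ha hb g h
    simp only [Pi.add_apply]
    rw [ha g h, hb g h, smul_add]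
    abel
  neg_mem' := by
    intro a ha g h
    simp only [Pi.neg_apply]
    rw [ha g h, smul_neg]
    abel

/-- 1-coboundaries of `G` with values in `M`. -/
def cb (M : Type) [AddCommGroup M] [DistribMulAction G M] : AddSubgroup (G → M) where
  carrier := {f | ∃ m : M, ∀ g : G, f g = g • m - m}
  zero_mem' := ⟨0, fun g => by simp⟩
  add_mem' := by
    rintro a b ⟨m, hm⟩ ⟨m', hm'⟩
    refine ⟨m + m', fun g => ?_⟩
    simp only [Pi.add_apply, hm g, hm' g, smul_add]
    abel
  neg_mem' := by
    rintro a ⟨m, hm⟩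
    refine ⟨-m, fun g => ?_⟩
    simp only [Pi.neg_apply, hm g, smul_neg]
    abel

/-- First group cohomology `H¹(G, M)` defined via 1-cocycles modulo 1-coboundaries. -/
abbrev H1 (M : Type) [AddCommGroup M] [DistribMulAction G M] : Type :=
  zc G M ⧸ ((cb G M).addSubgroupOf (zc G M))

variable {G}

/-- The map on 1-cocycles induced by an equivariant homomorphism. -/
def zcMap {M N : Type} [AddCommGroup M] [DistribMulAction G M] [AddCommGroup N]
    [DistribMulAction G N] (φ : M →+ N) (hφ : ∀ (g : G) (m : M), φ (g • m) = g • φ m) :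
    zc G M →+ zc G N where
  toFun f := ⟨fun g => φ (f.1 g), by
    intro g h
    have hf : f.1 (g * h) = f.1 g + g • f.1 h := f.2 g h
    dsimp only
    rw [hf, map_add, hφ]⟩
  map_zero' := Subtype.ext (funext fun g => by simp)
  map_add' a b := Subtype.ext (funext fun g => by simp)

/-- The map on `H¹` induced by an equivariant homomorphism. -/
def H1map {M N : Type} [AddCommGroup M] [DistribMulAction G M] [AddCommGroup N]
    [DistribMulAction G N] (φ : M →+ N) (hφ : ∀ (g : G) (m : M), φ (g • m) = g • φ m) :
    H1 G M →+ H1 G N :=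
  QuotientAddGroup.map _ _ (zcMap φ hφ) (by
    intro f h
    rw [AddSubgroup.mem_addSubgroupOf] at h
    rw [AddSubgroup.mem_comap, AddSubgroup.mem_addSubgroupOf]
    obtain ⟨m, hm⟩ := h
    exact ⟨φ m, fun g => by simp [zcMap, hm g, hφ]⟩)

end H1

section Lim
variable (G : Type) [Group G]
variable (A : ℕ → Type) [∀ n, AddCommGroup (A n)] (φ : ∀ n, A (n + 1) →+ A n)

/-- The inverse limit of a tower of abelian groups, as a subgroup of the product. -/
def limSub : AddSubgroup (∀ n, A n) where
  carrier := {a | ∀ n, φ n (a (n + 1)) = a n}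
  zero_mem' := fun n => map_zero _
  add_mem' := by intro a b ha hb n; rw [Pi.add_apply, Pi.add_apply, map_add, ha n, hb n]
  neg_mem' := by intro a ha n; rw [Pi.neg_apply, Pi.neg_apply, map_neg, ha n]

variable [∀ n, DistribMulAction G (A n)]
  (hφ : ∀ (n : ℕ) (g : G) (a : A (n + 1)), φ n (g • a) = g • φ n a)

/-- The `G`-action on the inverse limit of a tower of `G`-modules. -/
def limAct : DistribMulAction G (limSub A φ) where
  smul g a := ⟨fun n => g • a.1 n, fun n => by rw [hφ, a.2 n]⟩
  one_smul a := Subtype.ext (funext fun n => one_smul G (a.1 n))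
  mul_smul g h a := Subtype.ext (funext fun n => mul_smul g h (a.1 n))
  smul_zero g := Subtype.ext (funext fun n => smul_zero g)
  smul_add g a b := Subtype.ext (funext fun n => smul_add g (a.1 n) (b.1 n))

/-- Projection from the inverse limit to the `n`-th term. -/
def limProj (n : ℕ) : limSub A φ →+ A n :=
  (Pi.evalAddMonoidHom A n).comp (limSub A φ).subtype

end Lim

/-! Every class in `lim H¹(G, A_n)` is represented by a compatible family of cocycles: a cocycle
at level `n` can be lifted to level `n + 1` inside a prescribed class, after correcting the
chosen representative by the coboundary of a lift of the defect (surjectivity of `A_{n+1} → A_n`).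
Dually, a cocycle on the limit that is a coboundary `d m_n` at every level is a coboundary
`d m` of a compatible family: two choices of `m_n` differ by an invariant, and invariants lift.
-/

theorem exists_seq_succ {T : ℕ → Type*} (R : ∀ n, T n → T (n + 1) → Prop) (t₀ : T 0)
    (h : ∀ n (t : T n), ∃ t' : T (n + 1), R n t t') :
    ∃ s : ∀ n, T n, ∀ n, R n (s n) (s (n + 1)) := by
  choose f hf using h
  exact ⟨fun n => Nat.rec t₀ f n, fun n => hf n _⟩

section Cohomology

variable {G M N : Type} [Group G] [AddCommGroup M] [DistribMulAction G M] [AddCommGroup N]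
  [DistribMulAction G N] (φ : M →+ N)

theorem coboundary_mem_zc (m : M) : (fun g : G => g • m - m) ∈ zc G M := by
  intro g h
  simp only [mul_smul, smul_sub]
  abel

theorem H1_mk_eq_zero_iff (f : zc G M) :
    (QuotientAddGroup.mk f : H1 G M) = 0 ↔ ∃ m : M, ∀ g, f.1 g = g • m - m := by
  rw [QuotientAddGroup.eq_zero_iff, AddSubgroup.mem_addSubgroupOf]
  rfl

theorem H1map_mk (hφ : ∀ (g : G) (m : M), φ (g • m) = g • φ m) (f : zc G M) :
    H1map φ hφ (QuotientAddGroup.mk f) = QuotientAddGroup.mk (zcMap φ hφ f) := rfl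

theorem exists_zc_lift_of_H1map_eq (hφ : ∀ (g : G) (m : M), φ (g • m) = g • φ m)
    (hsurj : Function.Surjective φ) (f : zc G M) (e : zc G N)
    (h : H1map φ hφ (QuotientAddGroup.mk f) = QuotientAddGroup.mk e) :
    ∃ f' : zc G M, (QuotientAddGroup.mk f' : H1 G M) = QuotientAddGroup.mk f ∧
      zcMap φ hφ f' = e := by
  rw [H1map_mk, QuotientAddGroup.eq_iff_sub_mem, AddSubgroup.mem_addSubgroupOf] at h
  obtain ⟨n, hn⟩ := h
  obtain ⟨m, rfl⟩ := hsurj n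
  refine ⟨f - ⟨_, coboundary_mem_zc m⟩, ?_, ?_⟩
  · rw [QuotientAddGroup.eq_iff_sub_mem, AddSubgroup.mem_addSubgroupOf]
    refine ⟨-m, fun g => ?_⟩
    show f.1 g - (g • m - m) - f.1 g = g • -m - -m
    rw [smul_neg]
    abel
  · ext g
    have hg : φ (f.1 g) - e.1 g = g • φ m - φ m := hn g
    show φ (f.1 g - (g • m - m)) = e.1 g
    rw [map_sub, map_sub, hφ, ← hg]
    abel

theorem exists_coboundary_lift (hφ : ∀ (g : G) (m : M), φ (g • m) = g • φ m)
    (hlift : ∀ n : N, (∀ g : G, g • n = n) → ∃ m : M, (∀ g : G, g • m = m) ∧ φ m = n)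
    (f : G → M) {m₀ : M} (hm₀ : ∀ g, f g = g • m₀ - m₀) {n : N}
    (hn : ∀ g, φ (f g) = g • n - n) :
    ∃ m : M, (∀ g, f g = g • m - m) ∧ φ m = n := by
  have hinv : ∀ g : G, g • (φ m₀ - n) = φ m₀ - n := by
    intro g
    have h := hn g
    rw [hm₀ g, map_sub, hφ] at h
    rw [smul_sub, sub_eq_sub_iff_sub_eq_sub]
    exact h
  obtain ⟨c, hc, hcφ⟩ := hlift _ hinv
  refine ⟨m₀ - c, fun g => ?_, ?_⟩
  · rw [hm₀ g, smul_sub, hc g]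
    abel
  · rw [map_sub, hcφ]
    abel

end Cohomology

section Tower

variable {G : Type} [Group G] {A : ℕ → Type} [∀ n, AddCommGroup (A n)]
  [∀ n, DistribMulAction G (A n)] {φ : ∀ n, A (n + 1) →+ A n}
  (hφ : ∀ (n : ℕ) (g : G) (a : A (n + 1)), φ n (g • a) = g • φ n a)

def limZc (s : ∀ n, zc G (A n)) (hs : ∀ n, zcMap (φ n) (hφ n) (s (n + 1)) = s n) :
    @zc G _ (limSub A φ) _ (limAct G A φ hφ) :=
  ⟨fun g => ⟨fun n => (s n).1 g, fun n => congrArg (fun t : zc G (A n) => t.1 g) (hs n)⟩,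
    fun g h => Subtype.ext (funext fun n => (s n).2 g h)⟩

theorem zcMap_limProj_limZc (s : ∀ n, zc G (A n))
    (hs : ∀ n, zcMap (φ n) (hφ n) (s (n + 1)) = s n) (n : ℕ) :
    @zcMap G _ (limSub A φ) (A n) _ (limAct G A φ hφ) _ _ (limProj A φ n) (fun _ _ => rfl)
      (limZc hφ s hs) = s n := rfl

theorem H1_lim_surjective (hsurj : ∀ n, Function.Surjective (φ n))
    (α : ∀ n, H1 G (A n)) (hα : ∀ n, H1map (φ n) (hφ n) (α (n + 1)) = α n) :
    ∃ β : @H1 G _ (limSub A φ) _ (limAct G A φ hφ),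
      ∀ n, @H1map G _ (limSub A φ) (A n) _ (limAct G A φ hφ) _ _ (limProj A φ n)
        (fun _ _ => rfl) β = α n := by
  obtain ⟨f₀, hf₀⟩ := QuotientAddGroup.mk_surjective (α 0)
  obtain ⟨s, hs⟩ := exists_seq_succ
    (T := fun n => {f : zc G (A n) // (QuotientAddGroup.mk f : H1 G (A n)) = α n})
    (fun n t t' => zcMap (φ n) (hφ n) t'.1 = t.1) ⟨f₀, hf₀⟩ (by
      rintro n ⟨e, he⟩
      obtain ⟨f, hf⟩ := QuotientAddGroup.mk_surjective (α (n + 1))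
      obtain ⟨f', hf', hf'e⟩ := exists_zc_lift_of_H1map_eq (φ n) (hφ n) (hsurj n) f e
        (by rw [hf, he, hα])
      exact ⟨⟨f', hf'.trans hf⟩, hf'e⟩)
  refine ⟨@QuotientAddGroup.mk _ _ _ (limZc hφ (fun n => (s n).1) hs), fun n => ?_⟩
  rw [← (s n).2]
  exact congrArg QuotientAddGroup.mk (zcMap_limProj_limZc hφ _ hs n)

theorem H1_lim_injective
    (hsurjG : ∀ (n : ℕ) (a : A n), (∀ g : G, g • a = a) →
      ∃ b : A (n + 1), (∀ g : G, g • b = b) ∧ φ n b = a)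
    (β : @H1 G _ (limSub A φ) _ (limAct G A φ hφ))
    (hβ : ∀ n, @H1map G _ (limSub A φ) (A n) _ (limAct G A φ hφ) _ _ (limProj A φ n)
      (fun _ _ => rfl) β = 0) :
    β = 0 := by
  let _ := limAct G A φ hφ
  obtain ⟨f, rfl⟩ := QuotientAddGroup.mk_surjective β
  have hcb : ∀ n, ∃ m : A n, ∀ g : G, (f.1 g).1 n = g • m - m := fun n =>
    (H1_mk_eq_zero_iff _).1 (hβ n)
  obtain ⟨s, hs⟩ := exists_seq_succ
    (T := fun n => {m : A n // ∀ g : G, (f.1 g).1 n = g • m - m})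
    (fun n t t' => φ n t'.1 = t.1) ⟨_, (hcb 0).choose_spec⟩ (by
      rintro n ⟨m, hm⟩
      obtain ⟨m₀, hm₀⟩ := hcb (n + 1)
      obtain ⟨m', hm', hm'm⟩ := exists_coboundary_lift (φ n) (hφ n) (hsurjG n)
        (fun g => (f.1 g).1 (n + 1)) hm₀ (fun g => ((f.1 g).2 n).trans (hm g))
      exact ⟨⟨m', hm'⟩, hm'm⟩)
  exact (H1_mk_eq_zero_iff f).2
    ⟨⟨fun n => (s n).1, hs⟩, fun g => Subtype.ext (funext fun n => (s n).2 g)⟩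

end Tower

theorem stmt2_general (G : Type) [Group G]
    (A : ℕ → Type) [∀ n, AddCommGroup (A n)] [∀ n, DistribMulAction G (A n)]
    (φ : ∀ n, A (n + 1) →+ A n)
    (hφ : ∀ (n : ℕ) (g : G) (a : A (n + 1)), φ n (g • a) = g • φ n a)
    (hsurj : ∀ n, Function.Surjective (φ n))
    (hsurjG : ∀ (n : ℕ) (a : A n), (∀ g : G, g • a = a) →
      ∃ b : A (n + 1), (∀ g : G, g • b = b) ∧ φ n b = a) :
    (∀ α : ∀ n, H1 G (A n), (∀ n, H1map (φ n) (hφ n) (α (n + 1)) = α n) →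
      ∃ β : @H1 G _ ↥(limSub A φ) _ (limAct G A φ hφ),
        ∀ n, @H1map G _ ↥(limSub A φ) (A n) _ (limAct G A φ hφ) _ _ (limProj A φ n)
          (fun _ _ => rfl) β = α n) ∧
    (∀ β : @H1 G _ ↥(limSub A φ) _ (limAct G A φ hφ),
      (∀ n, @H1map G _ ↥(limSub A φ) (A n) _ (limAct G A φ hφ) _ _ (limProj A φ n)
        (fun _ _ => rfl) β = 0) → β = 0) :=
  ⟨H1_lim_surjective hφ hsurj, H1_lim_injective hφ hsurjG⟩

/-- Let `G` be a finite group and `{A_i}` an inverse system of `G`-modules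
indexed by ℕ with surjective transition maps and surjective induced maps on `G`-invariants.
Then the natural map `H¹(G, lim A_i) → lim H¹(G, A_i)` is an isomorphism (i.e. it is both
surjective onto the limit of the `H¹(G, A_i)` and injective). -/
theorem stmt2 (G : Type) [Group G] [Finite G]
    (A : ℕ → Type) [∀ n, AddCommGroup (A n)] [∀ n, DistribMulAction G (A n)]
    (φ : ∀ n, A (n + 1) →+ A n)
    (hφ : ∀ (n : ℕ) (g : G) (a : A (n + 1)), φ n (g • a) = g • φ n a)
    (hsurj : ∀ n, Function.Surjective (φ n))
    (hsurjG : ∀ (n : ℕ) (a : A n), (∀ g : G, g • a = a) →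
      ∃ b : A (n + 1), (∀ g : G, g • b = b) ∧ φ n b = a) :
    (∀ α : ∀ n, H1 G (A n), (∀ n, H1map (φ n) (hφ n) (α (n + 1)) = α n) →
      ∃ β : @H1 G _ ↥(limSub A φ) _ (limAct G A φ hφ),
        ∀ n, @H1map G _ ↥(limSub A φ) (A n) _ (limAct G A φ hφ) _ _ (limProj A φ n)
          (fun _ _ => rfl) β = α n) ∧
    (∀ β : @H1 G _ ↥(limSub A φ) _ (limAct G A φ hφ),
      (∀ n, @H1map G _ ↥(limSub A φ) (A n) _ (limAct G A φ hφ) _ _ (limProj A φ n)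
        (fun _ _ => rfl) β = 0) → β = 0) :=
  stmt2_general G A φ hφ hsurj hsurjG
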